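/- Let x : ℕ → {0,1,2} be a sequence satisfying x_{j+p} = x_j for all j ≥ m, where p ≥ 1, and let T(x) be defined by T(x)₀ = 1 if x₀ = 1 else 0, and T(x)ᵢ = 1 if xᵢ + T(x)ᵢ₋₁ = 1 else 0 for i ≥ 1. Then T(x) is eventually periodic with period 2p but not eventually periodic with period p if and only if the block x_m, x_{m+1}, …, x_{m+p−1} contains no symbol 2 and contains an odd number of symbols equal to 1. -/

import Mathlib

/-!
Off the symbol `2`, the recursion is `T(x)ᵢ = T(x)ᵢ₋₁ + xᵢ mod 2`, so across one period
`T(x)_{j+p} = T(x)_j + S mod 2`, where `S` is the number of `1`s in the periodic block: `T(x)` is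
then `p`-periodic when `S` is even and flips at every period when `S` is odd. A `2` in the block
resets `T(x)` to `0` at two positions `p` apart, and since `T(x)ᵢ` depends only on `xᵢ` and
`T(x)ᵢ₋₁`, this agreement propagates: `T(x)` is again eventually `p`-periodic.
-/

/-- The map `T` on sequences over `{0,1,2}`: `T(x)₀ = 1` iff `x₀ = 1`, and for `i ≥ 1`,
`T(x)ᵢ = 1` iff `xᵢ + T(x)ᵢ₋₁ = 1` (and `0` otherwise). -/
def Tmap (x : ℕ → ℕ) : ℕ → ℕ
  | 0 => if x 0 = 1 then 1 else 0
  | i + 1 => if x (i + 1) + Tmap x i = 1 then 1 else 0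

open Finset Function

lemma Tmap_le_one (x : ℕ → ℕ) (i : ℕ) : Tmap x i ≤ 1 := by
  cases i <;> (simp only [Tmap]; split <;> simp)

lemma Tmap_eq_zero_of_eq_two {x : ℕ → ℕ} {n : ℕ} (h : x n = 2) : Tmap x n = 0 := by
  cases n with
  | zero => simp [Tmap, h]
  | succ k => simp only [Tmap, h]; split <;> omega

lemma Tmap_succ_of_le_one {x : ℕ → ℕ} {i : ℕ} (h : x (i + 1) ≤ 1) :
    Tmap x (i + 1) = (Tmap x i + x (i + 1)) % 2 := by
  have := Tmap_le_one x i
  simp only [Tmap]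
  split <;> omega

lemma Tmap_add_of_le_one {x : ℕ → ℕ} {a k : ℕ} (h : ∀ i < k, x (a + 1 + i) ≤ 1) :
    Tmap x (a + k) = (Tmap x a + ∑ i ∈ range k, x (a + 1 + i)) % 2 := by
  induction k with
  | zero => simp [Nat.mod_eq_of_lt (Nat.lt_succ_of_le (Tmap_le_one x a))]
  | succ k ih =>
    have hk : x (a + k + 1) ≤ 1 := by simpa only [add_right_comm] using h k k.lt_succ_self
    rw [← add_assoc, Tmap_succ_of_le_one hk, ih fun i hi => h i (by omega), sum_range_succ,
      add_right_comm a 1 k]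
    omega

lemma Tmap_add_eq_of_ge {x : ℕ → ℕ} {p m j₀ : ℕ} (hper : ∀ j, m ≤ j → x (j + p) = x j)
    (hj₀ : m ≤ j₀) (h : Tmap x (j₀ + p) = Tmap x j₀) {j : ℕ} (hj : j₀ ≤ j) :
    Tmap x (j + p) = Tmap x j := by
  refine Nat.le_induction h (fun j hj₀j ih => ?_) j hj
  rw [add_right_comm]
  simp only [Tmap, ih]
  rw [add_right_comm j p 1, hper (j + 1) (by omega)]

lemma Tmap_eventually_periodic_of_eq_two {x : ℕ → ℕ} {p m j₀ : ℕ}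
    (hper : ∀ j, m ≤ j → x (j + p) = x j) (hj₀ : m ≤ j₀) (h2 : x j₀ = 2) :
    ∃ M, ∀ j, M ≤ j → Tmap x (j + p) = Tmap x j := by
  have h2' : x (j₀ + p) = 2 := (hper j₀ hj₀).trans h2
  exact ⟨j₀, fun _ => Tmap_add_eq_of_ge hper hj₀ <| by
    rw [Tmap_eq_zero_of_eq_two h2, Tmap_eq_zero_of_eq_two h2']⟩

lemma Function.Periodic.sum_range_add {M : Type*} [AddCommMonoid M] {f : ℕ → M} {p : ℕ}
    (hf : Periodic f p) (k : ℕ) : ∑ i ∈ range p, f (k + i) = ∑ i ∈ range p, f i := by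
  induction k with
  | zero => simp
  | succ k ih =>
    rcases p with _ | q
    · simp
    have hwrap : f (k + 1 + q) = f (k + 0) := by rw [add_assoc, add_comm 1 q, hf, add_zero]
    rw [← ih, sum_range_succ, sum_range_succ', hwrap]
    simp only [add_assoc, add_comm 1]

lemma periodic_tail {x : ℕ → ℕ} {p m : ℕ}
    (hper : ∀ j, m ≤ j → x (j + p) = x j) : Periodic (fun k => x (m + k)) p :=
  fun k => by simpa only [add_assoc] using hper (m + k) (Nat.le_add_right m k)

lemma Tmap_add_period {x : ℕ → ℕ} {p m : ℕ} (hper : ∀ j, m ≤ j → x (j + p) = x j)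
    (hblock : ∀ i < p, x (m + i) ≤ 1) {j : ℕ} (hj : m ≤ j) :
    Tmap x (j + p) = (Tmap x j + ∑ i ∈ range p, x (m + i)) % 2 := by
  have hy := periodic_tail hper
  have hshift (i : ℕ) : j + 1 + i = m + (j + 1 - m + i) := by omega
  have hwindow : ∀ i < p, x (j + 1 + i) ≤ 1 := fun i hi => by
    rw [hshift, ← hy.map_mod_nat]
    exact hblock _ (Nat.mod_lt _ (by omega))
  rw [Tmap_add_of_le_one hwindow, sum_congr rfl fun i _ => congrArg x (hshift i),
    hy.sum_range_add (j + 1 - m)]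

lemma sum_eq_card_filter_eq_one {ι : Type*} {s : Finset ι} {f : ι → ℕ}
    (hf : ∀ i ∈ s, f i ≤ 1) : ∑ i ∈ s, f i = #{i ∈ s | f i = 1} := by
  rw [card_filter]
  refine sum_congr rfl fun i hi => ?_
  have := hf i hi
  split <;> omega

theorem stmt_11_general (x : ℕ → ℕ) (hx : ∀ i, x i ≤ 2) (p m : ℕ)
    (hper : ∀ j, m ≤ j → x (j + p) = x j) :
    ((∃ M, ∀ j, M ≤ j → Tmap x (j + 2 * p) = Tmap x j) ∧
      ¬(∃ M, ∀ j, M ≤ j → Tmap x (j + p) = Tmap x j)) ↔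
    ((∀ i < p, x (m + i) ≠ 2) ∧
      Odd (((Finset.range p).filter fun i => x (m + i) = 1).card)) := by
  have hno2 : (∀ i < p, x (m + i) ≠ 2) ↔ ∀ i < p, x (m + i) ≤ 1 :=
    forall₂_congr fun i _ => by have := hx (m + i); omega
  rw [hno2]
  constructor
  · rintro ⟨-, hnp⟩
    have hblock : ∀ i < p, x (m + i) ≤ 1 := by
      by_contra! ⟨i, -, hi⟩
      exact hnp <| Tmap_eventually_periodic_of_eq_two hper (Nat.le_add_right m i)
        (by have := hx (m + i); omega)
    refine ⟨hblock, ?_⟩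
    rw [← sum_eq_card_filter_eq_one fun i hi => hblock i (mem_range.1 hi), Nat.odd_iff]
    by_contra heven
    exact hnp ⟨m, fun j hj => by
      rw [Tmap_add_period hper hblock hj]; have := Tmap_le_one x j; omega⟩
  · rintro ⟨hblock, hodd⟩
    rw [← sum_eq_card_filter_eq_one fun i hi => hblock i (mem_range.1 hi), Nat.odd_iff] at hodd
    have hflip (j : ℕ) (hj : m ≤ j) : Tmap x (j + p) = 1 - Tmap x j := by
      rw [Tmap_add_period hper hblock hj]; have := Tmap_le_one x j; omega
    refine ⟨⟨m, fun j hj => ?_⟩, fun ⟨M, hM⟩ => ?_⟩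
    · rw [two_mul, ← add_assoc, hflip _ (by omega), hflip j hj]
      have := Tmap_le_one x j; omega
    · have hMm := hM (max M m) (le_max_left M m)
      rw [hflip _ (le_max_right M m)] at hMm
      have := Tmap_le_one x (max M m); omega

theorem stmt_11 (x : ℕ → ℕ) (hx : ∀ i, x i ≤ 2) (p m : ℕ) (hp : 1 ≤ p)
    (hper : ∀ j, m ≤ j → x (j + p) = x j) :
    ((∃ M, ∀ j, M ≤ j → Tmap x (j + 2 * p) = Tmap x j) ∧
      ¬(∃ M, ∀ j, M ≤ j → Tmap x (j + p) = Tmap x j)) ↔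
    ((∀ i < p, x (m + i) ≠ 2) ∧
      Odd (((Finset.range p).filter fun i => x (m + i) = 1).card)) :=
  stmt_11_general x hx p m hper
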